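/- arXiv:2208.06677 — 4 statements merged into one kernel-verified Lean document; each statement's English description precedes it below -/
import Mathlib

section
/- Let f : ℝ^d → ℝ be differentiable, η > 0 and α ∈ [0,1]. Suppose sequences (θ_k) and (m_k) satisfy the (deterministic) Nesterov accelerated gradient recursion: g_k = ∇f(θ_k − η α m_{k−1}), m_k = α m_{k−1} + g_k, θ_{k+1} = θ_k − η m_k. Define θ̄_k := θ_k − η α m_{k−1} and m̄_k := α² m_{k−1} + (1+α) ∇f(θ̄_k). Then for all k ≥ 1: θ̄_{k+1} = θ̄_k − η m̄_k, and m̄_k − α m̄_{k−1} = ∇f(θ̄_k) + α (∇f(θ̄_k) − ∇f(θ̄_{k−1})). -/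
/-- equivalence between vanilla Nesterov AGD and its reformulation (Lemma 1,
deterministic version). -/
theorem adan_agd_reformulation {d : ℕ} (hd : 0 < d)
    (f : EuclideanSpace ℝ (Fin d) → ℝ) (hf : Differentiable ℝ f)
    (η α : ℝ) (hη : 0 < η) (hα0 : 0 ≤ α) (hα1 : α ≤ 1)
    (θ m g θbar mbar : ℤ → EuclideanSpace ℝ (Fin d))
    (hg : ∀ k : ℤ, 0 ≤ k → g k = gradient f (θ k - (η * α) • m (k - 1)))
    (hm : ∀ k : ℤ, 0 ≤ k → m k = α • m (k - 1) + g k)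
    (hθ : ∀ k : ℤ, 0 ≤ k → θ (k + 1) = θ k - η • m k)
    (hθbar : ∀ k : ℤ, 0 ≤ k → θbar k = θ k - (η * α) • m (k - 1))
    (hmbar : ∀ k : ℤ, 0 ≤ k →
      mbar k = (α ^ 2) • m (k - 1) + (1 + α) • gradient f (θbar k)) :
    ∀ k : ℤ, 1 ≤ k →
      θbar (k + 1) = θbar k - η • mbar k ∧
      mbar k - α • mbar (k - 1) =
        gradient f (θbar k) + α • (gradient f (θbar k) - gradient f (θbar (k - 1))) := by
  intro k hk
  have h0 : (0:ℤ) ≤ k := by linarith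
  have h1 : (0:ℤ) ≤ k - 1 := by linarith
  have h2 : (0:ℤ) ≤ k + 1 := by linarith
  have hgk : g k = gradient f (θbar k) := by rw [hg k h0, hθbar k h0]
  have hgk1 : g (k - 1) = gradient f (θbar (k - 1)) := by
    rw [hg _ h1, hθbar _ h1]
  constructor
  · have e1 := hθbar (k + 1) h2
    rw [add_sub_cancel_right] at e1
    rw [e1, hθ k h0, hm k h0, hgk, hmbar k h0, hθbar k h0]
    module
  · have hmk1 : m (k - 1) = α • m (k - 2) + gradient f (θbar (k - 1)) := by
      rw [hm _ h1, hgk1, show (k - 1 - 1 : ℤ) = k - 2 from by ring]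
    rw [hmbar k h0, hmbar (k - 1) h1, hmk1, show (k - 1 - 1 : ℤ) = k - 2 from by ring]
    module
end

section
/- Let f : ℝ^d → ℝ be differentiable with L-Lipschitz gradient, i.e. ‖∇f(x) − ∇f(y)‖ ≤ L‖x − y‖ for all x, y. Let β ∈ (0,1], σ ≥ 0, and let (θ_k) be a sequence of random vectors in ℝ^d and (ξ_k) a noise sequence with E[ξ_k | F_{k−1}] = 0 and E‖ξ_k‖² ≤ σ², where g_k = ∇f(θ_k) + ξ_k and ξ_k is independent of (m_{k−1}, θ_{k−1}, θ_k). Define m_k = (1−β) m_{k−1} + β g_k. Then E‖m_k − ∇f(θ_k)‖² ≤ (1−β) E‖m_{k−1} − ∇f(θ_{k−1})‖² + ((1−β)² L² / β) E‖θ_k − θ_{k−1}‖² + β² σ². -/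
/-!
Write `m_k - ∇f(θ_k) = A + β ξ_k` with `A = (1 - β)(m_{k-1} - ∇f(θ_k))`. Since `ξ_k` is centred
and independent of `A`, the cross term vanishes in expectation and
`E‖m_k - ∇f(θ_k)‖² = E‖A‖² + β² E‖ξ_k‖²`. Splitting
`A = (1 - β)((m_{k-1} - ∇f(θ_{k-1})) + (∇f(θ_{k-1}) - ∇f(θ_k)))` and applying Young's inequality
with weights `1 - β` and `β` gives the pointwise bound
`‖A‖² ≤ (1 - β)‖m_{k-1} - ∇f(θ_{k-1})‖² + ((1 - β)² L² / β)‖θ_k - θ_{k-1}‖²`.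
-/

open MeasureTheory ProbabilityTheory
open scoped RealInnerProductSpace

section Young

variable {E F : Type*} [SeminormedAddCommGroup E] [SeminormedAddCommGroup F] [NormedSpace ℝ F]

lemma norm_one_sub_smul_add_sq_le {β : ℝ} (hβ0 : 0 < β) (hβ1 : β ≤ 1) (u v : F) :
    ‖(1 - β) • (u + v)‖ ^ 2 ≤ (1 - β) * ‖u‖ ^ 2 + (1 - β) ^ 2 / β * ‖v‖ ^ 2 := by
  have hβ' : 0 ≤ 1 - β := sub_nonneg.2 hβ1
  have htri : ‖(1 - β) • (u + v)‖ ≤ (1 - β) * (‖u‖ + ‖v‖) := by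
    rw [norm_smul, Real.norm_of_nonneg hβ']
    exact mul_le_mul_of_nonneg_left (norm_add_le u v) hβ'
  have hgap : (1 - β) * ‖u‖ ^ 2 + (1 - β) ^ 2 / β * ‖v‖ ^ 2 - ((1 - β) * (‖u‖ + ‖v‖)) ^ 2
      = (1 - β) * (β * ‖u‖ - (1 - β) * ‖v‖) ^ 2 / β := by
    field_simp
    ring
  calc ‖(1 - β) • (u + v)‖ ^ 2 ≤ ((1 - β) * (‖u‖ + ‖v‖)) ^ 2 :=
        pow_le_pow_left₀ (norm_nonneg _) htri 2
    _ ≤ (1 - β) * ‖u‖ ^ 2 + (1 - β) ^ 2 / β * ‖v‖ ^ 2 := by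
        rw [← sub_nonneg, hgap]
        positivity

lemma norm_one_sub_smul_sub_sq_le {g : E → F} {L β : ℝ}
    (hg : ∀ x y, ‖g x - g y‖ ≤ L * ‖x - y‖) (hβ0 : 0 < β) (hβ1 : β ≤ 1) (w : F) (x y : E) :
    ‖(1 - β) • (w - g y)‖ ^ 2 ≤
      (1 - β) * ‖w - g x‖ ^ 2 + (1 - β) ^ 2 * L ^ 2 / β * ‖y - x‖ ^ 2 := by
  have hsplit : w - g y = (w - g x) + (g x - g y) := by abel
  have hg_sq : ‖g x - g y‖ ^ 2 ≤ L ^ 2 * ‖y - x‖ ^ 2 := by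
    rw [← mul_pow, norm_sub_rev y x]
    exact pow_le_pow_left₀ (norm_nonneg _) (hg x y) 2
  calc ‖(1 - β) • (w - g y)‖ ^ 2
      ≤ (1 - β) * ‖w - g x‖ ^ 2 + (1 - β) ^ 2 / β * ‖g x - g y‖ ^ 2 :=
        hsplit ▸ norm_one_sub_smul_add_sq_le hβ0 hβ1 _ _
    _ ≤ (1 - β) * ‖w - g x‖ ^ 2 + (1 - β) ^ 2 / β * (L ^ 2 * ‖y - x‖ ^ 2) := by gcongr
    _ = (1 - β) * ‖w - g x‖ ^ 2 + (1 - β) ^ 2 * L ^ 2 / β * ‖y - x‖ ^ 2 := by ring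

end Young

lemma measurable_gradient {E : Type*} [NormedAddCommGroup E] [InnerProductSpace ℝ E]
    [CompleteSpace E] [MeasurableSpace E] [BorelSpace E] (f : E → ℝ) :
    Measurable (gradient f) :=
  (InnerProductSpace.toDual ℝ E).symm.continuous.measurable.comp (measurable_fderiv ℝ f)

section SecondMoment

variable {Ω E : Type*} [MeasurableSpace Ω] {μ : Measure Ω}
  [NormedAddCommGroup E] [InnerProductSpace ℝ E]

lemma MeasureTheory.MemLp.integrable_inner {X Y : Ω → E} (hX : MemLp X 2 μ)
    (hY : MemLp Y 2 μ) : Integrable (fun ω => ⟪X ω, Y ω⟫) μ :=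
  (L2.integrable_inner (𝕜 := ℝ) (hX.toLp X) (hY.toLp Y)).congr <| by
    filter_upwards [hX.coeFn_toLp, hY.coeFn_toLp] with ω hXω hYω
    rw [hXω, hYω]

lemma integral_norm_add_sq_of_integral_inner_eq_zero {X Y : Ω → E} (hX : MemLp X 2 μ)
    (hY : MemLp Y 2 μ) (hXY : ∫ ω, ⟪X ω, Y ω⟫ ∂μ = 0) :
    ∫ ω, ‖X ω + Y ω‖ ^ 2 ∂μ = ∫ ω, ‖X ω‖ ^ 2 ∂μ + ∫ ω, ‖Y ω‖ ^ 2 ∂μ := by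
  have hX2 : Integrable (fun ω => ‖X ω‖ ^ 2) μ := hX.norm.integrable_sq
  have hY2 : Integrable (fun ω => ‖Y ω‖ ^ 2) μ := hY.norm.integrable_sq
  have hXY2 : Integrable (fun ω => 2 * ⟪X ω, Y ω⟫) μ := (hX.integrable_inner hY).const_mul 2
  simp_rw [norm_add_sq_real]
  rw [integral_add (f := fun ω => ‖X ω‖ ^ 2 + 2 * ⟪X ω, Y ω⟫) (hX2.add hXY2) hY2,
    integral_add hX2 hXY2, integral_const_mul, hXY, mul_zero, add_zero]

lemma ProbabilityTheory.IndepFun.integral_inner_eq_zero [CompleteSpace E] [MeasurableSpace E]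
    [BorelSpace E] {X Y : Ω → E} (hXY : IndepFun X Y μ) (hX : Integrable X μ)
    (hY : Integrable Y μ) (hY0 : ∫ ω, Y ω ∂μ = 0) : ∫ ω, ⟪X ω, Y ω⟫ ∂μ = 0 :=
  (hXY.integral_bilin hX hY (innerSL ℝ)).trans (by rw [hY0, map_zero])

lemma ProbabilityTheory.IndepFun.integral_norm_add_sq [IsFiniteMeasure μ] [CompleteSpace E]
    [MeasurableSpace E] [BorelSpace E] {X Y : Ω → E} (hXY : IndepFun X Y μ) (hX : MemLp X 2 μ)
    (hY : MemLp Y 2 μ) (hY0 : ∫ ω, Y ω ∂μ = 0) :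
    ∫ ω, ‖X ω + Y ω‖ ^ 2 ∂μ = ∫ ω, ‖X ω‖ ^ 2 ∂μ + ∫ ω, ‖Y ω‖ ^ 2 ∂μ :=
  integral_norm_add_sq_of_integral_inner_eq_zero hX hY <|
    hXY.integral_inner_eq_zero (hX.integrable one_le_two) (hY.integrable one_le_two) hY0

end SecondMoment

lemma integral_norm_one_sub_smul_sub_sq_le {Ω E F : Type*} [MeasurableSpace Ω] {μ : Measure Ω}
    [NormedAddCommGroup E] [NormedAddCommGroup F] [NormedSpace ℝ F] {g : E → F} {L β : ℝ}
    (hg : ∀ a b, ‖g a - g b‖ ≤ L * ‖a - b‖) (hβ0 : 0 < β) (hβ1 : β ≤ 1)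
    {w : Ω → F} {x y : Ω → E} (hw : MemLp w 2 μ) (hx : MemLp x 2 μ) (hy : MemLp y 2 μ)
    (hgx : MemLp (fun ω => g (x ω)) 2 μ) (hgy : MemLp (fun ω => g (y ω)) 2 μ) :
    ∫ ω, ‖(1 - β) • (w ω - g (y ω))‖ ^ 2 ∂μ ≤
      (1 - β) * ∫ ω, ‖w ω - g (x ω)‖ ^ 2 ∂μ +
        (1 - β) ^ 2 * L ^ 2 / β * ∫ ω, ‖y ω - x ω‖ ^ 2 ∂μ := by
  have hwx : Integrable (fun ω => ‖w ω - g (x ω)‖ ^ 2) μ := (hw.sub hgx).norm.integrable_sq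
  have hyx : Integrable (fun ω => ‖y ω - x ω‖ ^ 2) μ := (hy.sub hx).norm.integrable_sq
  rw [← integral_const_mul, ← integral_const_mul,
    ← integral_add (hwx.const_mul _) (hyx.const_mul _)]
  exact integral_mono ((hw.sub hgy).const_smul (1 - β)).norm.integrable_sq
    ((hwx.const_mul _).add (hyx.const_mul _))
    fun ω => norm_one_sub_smul_sub_sq_le hg hβ0 hβ1 _ _ _

theorem adan_first_moment_error_recursion_general {d : ℕ}
    {Ω : Type*} [MeasurableSpace Ω] (μ : Measure Ω) [IsProbabilityMeasure μ]
    (f : EuclideanSpace ℝ (Fin d) → ℝ)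
    (L σ β : ℝ) (hβ0 : 0 < β) (hβ1 : β ≤ 1)
    (hLip : ∀ x y, ‖gradient f x - gradient f y‖ ≤ L * ‖x - y‖)
    (θ ξ m : ℕ → Ω → EuclideanSpace ℝ (Fin d))
    (hξmean : ∀ k, ∫ ω, ξ k ω ∂μ = 0)
    (hξvar : ∀ k, ∫ ω, ‖ξ k ω‖ ^ 2 ∂μ ≤ σ ^ 2)
    (hξL2 : ∀ k, MemLp (ξ k) 2 μ)
    (hθL2 : ∀ k, MemLp (θ k) 2 μ)
    (hmL2 : ∀ k, MemLp (m k) 2 μ)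
    (hgradL2 : ∀ k, MemLp (fun ω => gradient f (θ k ω)) 2 μ)
    (hindep : ∀ k : ℕ, 1 ≤ k →
      IndepFun (ξ k) (fun ω => (m (k - 1) ω, θ (k - 1) ω, θ k ω)) μ)
    (hm : ∀ k : ℕ, 1 ≤ k →
      m k = fun ω => (1 - β) • m (k - 1) ω + β • (gradient f (θ k ω) + ξ k ω)) :
    ∀ k : ℕ, 1 ≤ k →
      ∫ ω, ‖m k ω - gradient f (θ k ω)‖ ^ 2 ∂μ ≤
        (1 - β) * ∫ ω, ‖m (k - 1) ω - gradient f (θ (k - 1) ω)‖ ^ 2 ∂μ +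
        ((1 - β) ^ 2 * L ^ 2 / β) * ∫ ω, ‖θ k ω - θ (k - 1) ω‖ ^ 2 ∂μ +
        β ^ 2 * σ ^ 2 := by
  intro k hk
  have hdecomp : ∀ ω, m k ω - gradient f (θ k ω) =
      (1 - β) • (m (k - 1) ω - gradient f (θ k ω)) + β • ξ k ω := by
    intro ω
    simp only [hm k hk]
    module
  have hindep' : IndepFun (fun ω => (1 - β) • (m (k - 1) ω - gradient f (θ k ω)))
      (fun ω => β • ξ k ω) μ :=
    ((hindep k hk).comp (measurable_const_smul β) ((measurable_fst.sub
      ((measurable_gradient f).comp (measurable_snd.comp measurable_snd))).const_smul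
        (1 - β))).symm
  have hpythagoras := hindep'.integral_norm_add_sq
    (((hmL2 (k - 1)).sub (hgradL2 k)).const_smul (1 - β)) ((hξL2 k).const_smul β)
    (by rw [integral_smul, hξmean, smul_zero])
  have hdrift := integral_norm_one_sub_smul_sub_sq_le hLip hβ0 hβ1
    (hmL2 (k - 1)) (hθL2 (k - 1)) (hθL2 k) (hgradL2 (k - 1)) (hgradL2 k)
  have hnoise : ∫ ω, ‖β • ξ k ω‖ ^ 2 ∂μ ≤ β ^ 2 * σ ^ 2 := by
    simp_rw [norm_smul, mul_pow, Real.norm_eq_abs, sq_abs, integral_const_mul]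
    exact mul_le_mul_of_nonneg_left (hξvar k) (sq_nonneg β)
  simp_rw [hdecomp]
  linarith

/-- one-step error bound for the first-moment moving average (Lemma on m_k).
The gradient noise ξ_k is mean zero, has variance at most σ², and is independent of
(m_{k−1}, θ_{k−1}, θ_k). -/
theorem adan_first_moment_error_recursion {d : ℕ} (hd : 0 < d)
    {Ω : Type*} [MeasurableSpace Ω] (μ : Measure Ω) [IsProbabilityMeasure μ]
    (f : EuclideanSpace ℝ (Fin d) → ℝ) (hf : Differentiable ℝ f)
    (L σ β : ℝ) (hL : 0 ≤ L) (hσ : 0 ≤ σ) (hβ0 : 0 < β) (hβ1 : β ≤ 1)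
    (hLip : ∀ x y, ‖gradient f x - gradient f y‖ ≤ L * ‖x - y‖)
    (θ ξ m : ℕ → Ω → EuclideanSpace ℝ (Fin d))
    (hξmean : ∀ k, ∫ ω, ξ k ω ∂μ = 0)
    (hξvar : ∀ k, ∫ ω, ‖ξ k ω‖ ^ 2 ∂μ ≤ σ ^ 2)
    (hξL2 : ∀ k, MemLp (ξ k) 2 μ)
    (hθL2 : ∀ k, MemLp (θ k) 2 μ)
    (hmL2 : ∀ k, MemLp (m k) 2 μ)
    (hgradL2 : ∀ k, MemLp (fun ω => gradient f (θ k ω)) 2 μ)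
    (hindep : ∀ k : ℕ, 1 ≤ k →
      IndepFun (ξ k) (fun ω => (m (k - 1) ω, θ (k - 1) ω, θ k ω)) μ)
    (hm : ∀ k : ℕ, 1 ≤ k →
      m k = fun ω => (1 - β) • m (k - 1) ω + β • (gradient f (θ k ω) + ξ k ω)) :
    ∀ k : ℕ, 1 ≤ k →
      ∫ ω, ‖m k ω - gradient f (θ k ω)‖ ^ 2 ∂μ ≤
        (1 - β) * ∫ ω, ‖m (k - 1) ω - gradient f (θ (k - 1) ω)‖ ^ 2 ∂μ +
        ((1 - β) ^ 2 * L ^ 2 / β) * ∫ ω, ‖θ k ω - θ (k - 1) ω‖ ^ 2 ∂μ +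
        β ^ 2 * σ ^ 2 :=
  adan_first_moment_error_recursion_general μ f L σ β hβ0 hβ1 hLip θ ξ m hξmean hξvar hξL2 hθL2 hmL2
    hgradL2 hindep hm
end

section
/- Let β ∈ (0, 1/2] and define q := β (1−β)^{3/4} ∈ (0,1). Let (a_k)_{k≥1} be a nonnegative sequence and R ≥ 0 such that for all k ≥ 1, a_k ≤ √(1−β) · R/√k + q · a_{k−1}, with a_0 = 0. Then for all k ≥ 1: a_k ≤ √(1−β) · R · ∑_{t=0}^{k−1} q^t / √(k−t), and moreover, by Hölder's inequality with exponents 4 and 4/3, a_k ≤ √(1−β) · R · (∑_{t=1}^{k} 1/t²)^{1/4} · (∑_{t=0}^{∞} q^{4t/3})^{3/4}. -/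
/-!
Unrolling the recursion bounds `a k` by the convolution `∑_{t<k} q^t b (k - t)` with
`b n = √(1-β) R / √n`. Hölder's inequality with exponents `4` and `4/3` splits this into
`(∑_{t<k} b (k - t)^4)^{1/4}`, where `b (k - t)^4` is a multiple of `1/(k - t)^2`, and
`(∑_{t<k} q^{4t/3})^{3/4}`, which is at most the full geometric series because `0 ≤ q < 1`.
-/

open Finset Real

theorem Finset.sum_range_sub_eq_sum_Icc {M : Type*} [AddCommMonoid M] (f : ℕ → M) (k : ℕ) :
    ∑ t ∈ range k, f (k - t) = ∑ t ∈ Icc 1 k, f t := by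
  rw [← Nat.Ico_zero_eq_range, sum_Ico_reflect f 0 k.le_succ, Nat.add_sub_cancel_left,
    Nat.sub_zero, Ico_add_one_right_eq_Icc]

theorem le_sum_range_pow_mul_of_le_add_mul {a b : ℕ → ℝ} {q : ℝ} (hq : 0 ≤ q) (ha0 : a 0 ≤ 0)
    (hrec : ∀ k, a (k + 1) ≤ b (k + 1) + q * a k) (k : ℕ) :
    a k ≤ ∑ t ∈ range k, q ^ t * b (k - t) := by
  induction k with
  | zero => simpa using ha0
  | succ k ih =>
    calc a (k + 1) ≤ b (k + 1) + q * ∑ t ∈ range k, q ^ t * b (k - t) := by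
          grw [hrec k, ih]
      _ = ∑ t ∈ range (k + 1), q ^ t * b (k + 1 - t) := by
          rw [sum_range_succ', mul_sum]
          simp only [Nat.add_sub_add_right, Nat.sub_zero, pow_succ', mul_assoc, pow_zero, one_mul,
            add_comm]

theorem summable_rpow_mul_natCast {q : ℝ} (hq0 : 0 ≤ q) (hq1 : q < 1) {p : ℝ} (hp : 0 < p) :
    Summable fun t : ℕ => q ^ (p * t) := by
  simp_rw [rpow_mul_natCast hq0]
  exact summable_geometric_of_lt_one (rpow_nonneg hq0 p) (rpow_lt_one hq0 hq1 hp)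

theorem sum_range_pow_rpow_le_tsum {q : ℝ} (hq0 : 0 ≤ q) (hq1 : q < 1) {p : ℝ} (hp : 0 < p)
    (k : ℕ) : ∑ t ∈ range k, (q ^ t) ^ p ≤ ∑' t : ℕ, q ^ (p * t) := by
  simp_rw [← rpow_natCast_mul hq0, mul_comm _ p]
  exact (summable_rpow_mul_natCast hq0 hq1 hp).sum_le_tsum _ fun t _ => rpow_nonneg hq0 _

theorem Real.one_div_sqrt_rpow_four {x : ℝ} (hx : 0 ≤ x) : (1 / √x) ^ (4 : ℝ) = 1 / x ^ 2 := by
  rw [show (4 : ℝ) = (4 : ℕ) by norm_num, rpow_natCast, div_pow, one_pow,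
    show 4 = 2 * 2 by rfl, pow_mul, sq_sqrt hx]

theorem sum_range_pow_div_sqrt_sub_le {q : ℝ} (hq0 : 0 ≤ q) (hq1 : q < 1) (k : ℕ) :
    ∑ t ∈ range k, q ^ t / √((k : ℝ) - t) ≤
      (∑ t ∈ Icc 1 k, (1 : ℝ) / (t : ℝ) ^ 2) ^ ((1 : ℝ) / 4) *
        (∑' t : ℕ, q ^ ((4 * (t : ℝ)) / 3)) ^ ((3 : ℝ) / 4) := by
  have hpq : HolderConjugate 4 (4 / 3) := holderConjugate_iff.mpr ⟨by norm_num, by norm_num⟩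
  have holder := inner_le_Lp_mul_Lq_of_nonneg (range k) hpq
    (f := fun t => 1 / √((k : ℝ) - t)) (g := fun t => q ^ t)
    (fun _ _ => by positivity) (fun _ _ => by positivity)
  have hA : ∑ t ∈ range k, (1 / √((k : ℝ) - t)) ^ (4 : ℝ) =
      ∑ t ∈ Icc 1 k, (1 : ℝ) / (t : ℝ) ^ 2 := by
    rw [← sum_range_sub_eq_sum_Icc]
    refine sum_congr rfl fun t ht => ?_
    rw [Nat.cast_sub (mem_range.mp ht).le, one_div_sqrt_rpow_four]
    simpa using (mem_range.mp ht).le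
  have hB : ∑ t ∈ range k, (q ^ t) ^ ((4 : ℝ) / 3) ≤ ∑' t : ℕ, q ^ ((4 * (t : ℝ)) / 3) := by
    simpa only [mul_div_right_comm] using
      sum_range_pow_rpow_le_tsum hq0 hq1 (p := 4 / 3) (by norm_num) k
  calc ∑ t ∈ range k, q ^ t / √((k : ℝ) - t)
      = ∑ t ∈ range k, 1 / √((k : ℝ) - t) * q ^ t := by
        simp only [one_div_mul_eq_div]
    _ ≤ _ := holder
    _ ≤ _ := by
        rw [hA, show (1 : ℝ) / (4 / 3) = 3 / 4 by norm_num]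
        gcongr

theorem mul_one_sub_rpow_lt_one {β p : ℝ} (hβ0 : 0 ≤ β) (hβ1 : β < 1) (hp : 0 ≤ p) :
    β * (1 - β) ^ p < 1 :=
  calc β * (1 - β) ^ p ≤ β * 1 := by gcongr; exact rpow_le_one (by linarith) (by linarith) hp
    _ < 1 := by linarith

theorem recursion_unroll_holder_bound_general (β R : ℝ) (hβ0 : 0 < β) (hβ1 : β ≤ 1 / 2)
    (hR : 0 ≤ R) (a : ℕ → ℝ) (ha0 : a 0 = 0)
    (hrec : ∀ k : ℕ, 1 ≤ k →
      a k ≤ Real.sqrt (1 - β) * R / Real.sqrt k +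
        (β * (1 - β) ^ ((3 : ℝ) / 4)) * a (k - 1)) :
    ∀ k : ℕ, 1 ≤ k →
      a k ≤ Real.sqrt (1 - β) * R *
          ∑ t ∈ Finset.range k,
            (β * (1 - β) ^ ((3 : ℝ) / 4)) ^ t / Real.sqrt (k - t) ∧
      a k ≤ Real.sqrt (1 - β) * R *
          (∑ t ∈ Finset.Icc 1 k, (1 : ℝ) / (t : ℝ) ^ 2) ^ ((1 : ℝ) / 4) *
          (∑' t : ℕ, (β * (1 - β) ^ ((3 : ℝ) / 4)) ^ ((4 * (t : ℝ)) / 3)) ^ ((3 : ℝ) / 4) := by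
  set q := β * (1 - β) ^ ((3 : ℝ) / 4)
  set c := √(1 - β) * R
  have hq0 : 0 ≤ q := mul_nonneg hβ0.le (rpow_nonneg (by linarith) _)
  have hq1 : q < 1 := mul_one_sub_rpow_lt_one hβ0.le (by linarith) (by norm_num)
  have unrolled (k : ℕ) : a k ≤ c * ∑ t ∈ range k, q ^ t / √((k : ℝ) - t) := by
    have h := le_sum_range_pow_mul_of_le_add_mul (b := fun n => c / √n) hq0 ha0.le
      (fun k => by simpa using hrec (k + 1) (by omega)) k
    rwa [mul_sum, sum_congr rfl fun t ht => ?_]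
    rw [Nat.cast_sub (mem_range.mp ht).le]
    ring
  intro k _
  refine ⟨unrolled k, (unrolled k).trans ?_⟩
  rw [mul_assoc c]
  exact mul_le_mul_of_nonneg_left (sum_range_pow_div_sqrt_sub_le hq0 hq1 k) (by positivity)

/-- unrolling the recursion a_k ≤ √(1−β)·R/√k + q·a_{k−1} with
q = β(1−β)^{3/4}, and the Hölder bound with exponents 4 and 4/3. -/
theorem recursion_unroll_holder_bound (β R : ℝ) (hβ0 : 0 < β) (hβ1 : β ≤ 1 / 2)
    (hR : 0 ≤ R) (a : ℕ → ℝ) (ha0 : a 0 = 0) (hpos : ∀ k, 0 ≤ a k)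
    (hrec : ∀ k : ℕ, 1 ≤ k →
      a k ≤ Real.sqrt (1 - β) * R / Real.sqrt k +
        (β * (1 - β) ^ ((3 : ℝ) / 4)) * a (k - 1)) :
    ∀ k : ℕ, 1 ≤ k →
      a k ≤ Real.sqrt (1 - β) * R *
          ∑ t ∈ Finset.range k,
            (β * (1 - β) ^ ((3 : ℝ) / 4)) ^ t / Real.sqrt (k - t) ∧
      a k ≤ Real.sqrt (1 - β) * R *
          (∑ t ∈ Finset.Icc 1 k, (1 : ℝ) / (t : ℝ) ^ 2) ^ ((1 : ℝ) / 4) *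
          (∑' t : ℕ, (β * (1 - β) ^ ((3 : ℝ) / 4)) ^ ((4 * (t : ℝ)) / 3)) ^ ((3 : ℝ) / 4) :=
  recursion_unroll_holder_bound_general β R hβ0 hβ1 hR a ha0 hrec
end

section
/- Let η > 0, β ∈ (0,1], and let (η_k) be a sequence of vectors in ℝ^d with strictly positive entries, (g_k) a sequence in ℝ^d, and define sequences (x_k), (y_k), (m̂_k) by the Adan reformulation: y_{k+1} = x_k − β η_k ∘ g_k and x_{k+1} = y_{k+1} + (1−β)[(y_{k+1} − y_k) + ((η_{k−1} − η_k)/η_{k−1}) ∘ (y_k − x_k)] (entrywise operations). Suppose also x_{k+1} = x_k − η_k ∘ m̂_k where m̂_k = (1−β) m̂_{k−1} + β (g_k + (1−β)(g_k − g_{k−1})). Then these two descriptions are equivalent: if y_{k+1} := x_{k+1} + η_k ∘ (m̂_k − β g_k), the recursion x_{k+1} = x_k − η_k ∘ m̂_k with the m̂ update implies the two-sequence (x, y) recursion above. -/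
/-- equivalence between Adan's implementable one-sequence form
(x_{k+1} = x_k − η_k ∘ m̂_k with the moving average m̂) and the two-sequence
Nesterov-style (x, y) recursion, where y_{k+1} := x_{k+1} + η_k ∘ (m̂_k − β g_k).
All vector operations are entrywise on `Fin d → ℝ`. -/
theorem adan_two_sequence_reformulation {d : ℕ} (hd : 0 < d)
    (η β : ℝ) (hη : 0 < η) (hβ0 : 0 < β) (hβ1 : β ≤ 1)
    (ηv x y g mhat : ℕ → (Fin d → ℝ))
    (hηpos : ∀ k i, 0 < ηv k i)
    (hmhat : ∀ k : ℕ, 1 ≤ k →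
      mhat k = (1 - β) • mhat (k - 1) + β • (g k + (1 - β) • (g k - g (k - 1))))
    (hx : ∀ k : ℕ, x (k + 1) = x k - ηv k * mhat k)
    (hy : ∀ k : ℕ, y (k + 1) = x (k + 1) + ηv k * (mhat k - β • g k)) :
    ∀ k : ℕ, 1 ≤ k →
      y (k + 1) = x k - β • (ηv k * g k) ∧
      x (k + 1) = y (k + 1) + (1 - β) •
        ((y (k + 1) - y k) + ((ηv (k - 1) - ηv k) / ηv (k - 1)) * (y k - x k)) := by
  intro k hk
  have hkk : k - 1 + 1 = k := Nat.succ_pred_eq_of_pos hk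
  have hyk : y k = x k + ηv (k - 1) * (mhat (k - 1) - β • g (k - 1)) := by
    have := hy (k - 1)
    rw [hkk] at this
    exact this
  constructor
  · rw [hy k, hx k]
    funext i
    simp only [Pi.add_apply, Pi.sub_apply, Pi.mul_apply, Pi.smul_apply, smul_eq_mul]
    ring
  · rw [hy k, hx k, hyk, hmhat k hk]
    funext i
    have hne : ηv (k - 1) i ≠ 0 := (hηpos (k - 1) i).ne'
    simp only [Pi.add_apply, Pi.sub_apply, Pi.mul_apply, Pi.div_apply, Pi.smul_apply,
      smul_eq_mul]
    field_simp
    ring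
end
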